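/- Let Z(w) := [[z₁,z₂,z₃],[z₂,z₄,z₅],[z₃,z₅,z₆]] with z₁ = (3/16)·w⁵, z₂ = (3√5/16)·w⁴, z₃ = (√10/8)·w³, z₄ = w³, z₅ = (3√2/4)·w², z₆ = (3/2)·w, and let Ω be the map sending a complex symmetric 3×3 matrix with entries z₁,…,z₆ to the vector (√2·z₆, √2·(z₁z₆ - z₃²), √2·(z₅² - z₄z₆), -√2·(z₆z₂² - 2z₃z₅z₂ + z₃²z₄ + z₁(z₅² - z₄z₆)), 2z₂z₃ - 2z₁z₅, 2z₃z₄ - 2z₂z₅, 2z₃z₅ - 2z₂z₆, √2·(z₁z₄ - z₂²), -√2·z₄, √2·z₁, √2, -2z₅, 2z₃, -2z₂) ∈ ℂ¹⁴. Then for every w ∈ ℂ, Ω(Z(w))ᵀ · C₁₄ · conj(Ω(Z(w))) = (1/256)·(w - conj(w))⁹. (This identifies the pulled-back Kähler potential on the sl(2)-orbit 𝔒₁ curve with that of a constant-curvature Lobachevsky plane of spin 9/2.) -/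

import Mathlib

/-!
The section `Ω` comes from the cubic prepotential `det Z`, and its symplectic pairing is
polarised by the determinant: `⟨Ω(Z), Ω(Y)⟩ = 2 det(Z - Y)` for all symmetric `Z`, `Y`,
with no conjugation involved. Since `Ω` has real coefficients, `conj Ω(Z) = Ω(conj Z)`, so the
claim reduces to `det(Z(w) - Z(v)) = (w - v)⁹ / 512`, a polynomial identity in `w`, `v`
once `√2² = 2`, `√5² = 5` and `√10 = √2 √5` are used.
-/

noncomputable section

open Matrix

/-- The holomorphic symplectic section (in the `14'`-representation of `Sp(6,ℝ)`) of
the special Kähler manifold `Sp(6,ℝ)/(SU(3)×U(1))`, as a function of the entries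
`z₁,…,z₆` of the complex symmetric matrix `Z`. -/
def Omega14 (z1 z2 z3 z4 z5 z6 : ℂ) : Fin 14 → ℂ :=
  let s2 : ℂ := (Real.sqrt 2 : ℝ)
  ![s2 * z6,
    s2 * (z1*z6 - z3^2),
    s2 * (z5^2 - z4*z6),
    -(s2 * (z6*z2^2 - 2*z3*z5*z2 + z3^2*z4 + z1*(z5^2 - z4*z6))),
    2*z2*z3 - 2*z1*z5,
    2*z3*z4 - 2*z2*z5,
    2*z3*z5 - 2*z2*z6,
    s2 * (z1*z4 - z2^2),
    -(s2 * z4),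
    s2 * z1,
    s2,
    -(2*z5),
    2*z3,
    -(2*z2)]

/-- The standard symplectic form of `Sp(14,ℝ)`, with 7×7 block form `[[0,1₇],[-1₇,0]]`. -/
def C14 : Matrix (Fin 14) (Fin 14) ℂ :=
  Matrix.of fun i j =>
    if (i : ℕ) + 7 = (j : ℕ) then 1 else if (j : ℕ) + 7 = (i : ℕ) then -1 else 0

def symMatrix3 {R : Type*} (z1 z2 z3 z4 z5 z6 : R) : Matrix (Fin 3) (Fin 3) R :=
  !![z1, z2, z3; z2, z4, z5; z3, z5, z6]

lemma ofReal_sqrt_sq {x : ℝ} (hx : 0 ≤ x) : ((Real.sqrt x : ℝ) : ℂ) ^ 2 = x := by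
  rw [← Complex.ofReal_pow, Real.sq_sqrt hx]

theorem symMatrix3_sub_symMatrix3 {R : Type*} [Sub R] (z1 z2 z3 z4 z5 z6 y1 y2 y3 y4 y5 y6 : R) :
    symMatrix3 z1 z2 z3 z4 z5 z6 - symMatrix3 y1 y2 y3 y4 y5 y6 =
      symMatrix3 (z1 - y1) (z2 - y2) (z3 - y3) (z4 - y4) (z5 - y5) (z6 - y6) := by
  ext i j
  fin_cases i <;> fin_cases j <;> rfl

theorem det_symMatrix3 {R : Type*} [CommRing R] (z1 z2 z3 z4 z5 z6 : R) :
    (symMatrix3 z1 z2 z3 z4 z5 z6).det =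
      z1 * z4 * z6 + 2 * z2 * z3 * z5 - z1 * z5 ^ 2 - z2 ^ 2 * z6 - z3 ^ 2 * z4 := by
  simp [symMatrix3, Matrix.det_fin_three]
  ring

theorem dotProduct_C14_mulVec (x y : Fin 14 → ℂ) :
    x ⬝ᵥ C14 *ᵥ y =
      ∑ i : Fin 7,
        (x (Fin.castAdd 7 i) * y (Fin.natAdd 7 i) - x (Fin.natAdd 7 i) * y (Fin.castAdd 7 i)) := by
  simp [dotProduct, mulVec, C14, Fin.sum_univ_succ]
  ring

theorem Omega14_dotProduct_C14_mulVec_Omega14 (z1 z2 z3 z4 z5 z6 y1 y2 y3 y4 y5 y6 : ℂ) :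
    Omega14 z1 z2 z3 z4 z5 z6 ⬝ᵥ C14 *ᵥ Omega14 y1 y2 y3 y4 y5 y6 =
      2 * (symMatrix3 z1 z2 z3 z4 z5 z6 - symMatrix3 y1 y2 y3 y4 y5 y6).det := by
  rw [dotProduct_C14_mulVec, symMatrix3_sub_symMatrix3, det_symMatrix3]
  simp only [Omega14, Fin.sum_univ_succ, Finset.univ_unique, Fin.default_eq_zero, Finset.sum_singleton,
    Finset.sum_sub_distrib, Fin.natAdd_eq_addNat, Fin.isValue, Fin.reduceCastAdd, Fin.reduceAddNat,
    Fin.succ_zero_eq_one, Fin.succ_one_eq_two, Fin.reduceSucc, cons_val_zero, cons_val, cons_val_one,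
    mul_neg, neg_mul]
  have h2 : ((Real.sqrt 2 : ℝ) : ℂ) ^ 2 = 2 := by exact_mod_cast ofReal_sqrt_sq zero_le_two
  grind

theorem conj_Omega14 (z1 z2 z3 z4 z5 z6 : ℂ) :
    (fun j => starRingEnd ℂ (Omega14 z1 z2 z3 z4 z5 z6 j)) =
      Omega14 (starRingEnd ℂ z1) (starRingEnd ℂ z2) (starRingEnd ℂ z3) (starRingEnd ℂ z4)
        (starRingEnd ℂ z5) (starRingEnd ℂ z6) := by
  funext j
  fin_cases j <;> simp [Omega14, map_ofNat]

def orbitCurve (w : ℂ) : Matrix (Fin 3) (Fin 3) ℂ :=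
  symMatrix3 ((3 / 16) * w ^ 5) ((3 * (Real.sqrt 5 : ℂ) / 16) * w ^ 4)
    (((Real.sqrt 10 : ℂ) / 8) * w ^ 3) (w ^ 3) ((3 * (Real.sqrt 2 : ℂ) / 4) * w ^ 2)
    ((3 / 2) * w)

theorem det_orbitCurve_sub_orbitCurve (w v : ℂ) :
    (orbitCurve w - orbitCurve v).det = (w - v) ^ 9 / 512 := by
  have h2 : ((Real.sqrt 2 : ℝ) : ℂ) ^ 2 = 2 := by exact_mod_cast ofReal_sqrt_sq zero_le_two
  have h5 : ((Real.sqrt 5 : ℝ) : ℂ) ^ 2 = 5 := by exact_mod_cast ofReal_sqrt_sq (by norm_num)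
  have h10 : ((Real.sqrt 10 : ℝ) : ℂ) = Real.sqrt 2 * Real.sqrt 5 := by
    rw [← Complex.ofReal_mul, ← Real.sqrt_mul zero_le_two]; norm_num
  rw [orbitCurve, orbitCurve, symMatrix3_sub_symMatrix3, det_symMatrix3, h10]
  ring_nf
  simp only [h2, h5]
  ring

/-- along the holomorphic curve `w ↦ Z(w)` of the orbit `𝔒₁`, the
symplectic section satisfies
`Ω(Z(w))ᵀ · C₁₄ · conj(Ω(Z(w))) = (1/256)·(w - conj w)⁹`. -/
theorem stmt_19 (w : ℂ) :
    let z1 : ℂ := (3 / 16) * w ^ 5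
    let z2 : ℂ := (3 * (Real.sqrt 5 : ℂ) / 16) * w ^ 4
    let z3 : ℂ := ((Real.sqrt 10 : ℂ) / 8) * w ^ 3
    let z4 : ℂ := w ^ 3
    let z5 : ℂ := (3 * (Real.sqrt 2 : ℂ) / 4) * w ^ 2
    let z6 : ℂ := (3 / 2) * w
    dotProduct (Omega14 z1 z2 z3 z4 z5 z6)
        (C14.mulVec fun j => starRingEnd ℂ (Omega14 z1 z2 z3 z4 z5 z6 j)) =
      (1 / 256) * (w - starRingEnd ℂ w) ^ 9 := by
  intro z1 z2 z3 z4 z5 z6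
  rw [conj_Omega14, Omega14_dotProduct_C14_mulVec_Omega14]
  have hconj : symMatrix3 (starRingEnd ℂ z1) (starRingEnd ℂ z2) (starRingEnd ℂ z3) (starRingEnd ℂ z4)
      (starRingEnd ℂ z5) (starRingEnd ℂ z6) = orbitCurve (starRingEnd ℂ w) := by
    simp [z1, z2, z3, z4, z5, z6, orbitCurve, map_ofNat]
  rw [hconj, show symMatrix3 z1 z2 z3 z4 z5 z6 = orbitCurve w from rfl,
    det_orbitCurve_sub_orbitCurve]
  ring

end
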